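/- Let (H,α) be a monoidal Hom-Hopf algebra over a commutative ring k and let (M,μ) be a right-covariant (H,α)-Hom-bimodule. Define h▷m := α(h₁)·(μ⁻¹(m)·S(h₂)) for h∈H, m∈M. Then for m∈M^coH: h▷m∈M^coH, and ▷ makes (M^coH, μ restricted) a left (H,α)-Hom-module: 1▷m=μ(m) and (gh)▷μ(m)=α(g)▷(h▷m) for all g,h∈H, m∈M^coH. -/

import Mathlib

open TensorProduct

noncomputable def tmul2 {k A B C D E F : Type*} [CommRing k]
    [AddCommGroup A] [AddCommGroup B] [AddCommGroup C] [AddCommGroup D]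
    [AddCommGroup E] [AddCommGroup F]
    [Module k A] [Module k B] [Module k C] [Module k D] [Module k E] [Module k F]
    (f : A →ₗ[k] C →ₗ[k] E) (g : B →ₗ[k] D →ₗ[k] F) :
    (A ⊗[k] B) →ₗ[k] (C ⊗[k] D) →ₗ[k] (E ⊗[k] F) :=
  TensorProduct.curry
    ((TensorProduct.map (TensorProduct.lift f) (TensorProduct.lift g)) ∘ₗ
      (TensorProduct.tensorTensorTensorComm k A B C D).toLinearMap)

/-- A monoidal Hom-Hopf algebra over a commutative ring `k`. -/
structure MonHomHopf (k H : Type*) [CommRing k] [AddCommGroup H] [Module k H] where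
  α : H ≃ₗ[k] H
  mul : H →ₗ[k] H →ₗ[k] H
  one : H
  comul : H →ₗ[k] H ⊗[k] H
  counit : H →ₗ[k] k
  S : H →ₗ[k] H
  alpha_mul : ∀ g h, α (mul g h) = mul (α g) (α h)
  alpha_one : α one = one
  hom_assoc : ∀ g h l, mul (α g) (mul h l) = mul (mul g h) (α l)
  mul_one' : ∀ h, mul h one = α h
  one_mul' : ∀ h, mul one h = α h
  comul_alpha : ∀ h, comul (α h)
    = TensorProduct.map α.toLinearMap α.toLinearMap (comul h)
  counit_alpha : ∀ h, counit (α h) = counit h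
  hom_coassoc : ∀ h,
    (TensorProduct.assoc k H H H) ((TensorProduct.map comul α.symm.toLinearMap) (comul h))
      = (TensorProduct.map α.symm.toLinearMap comul) (comul h)
  counit_comul_left : ∀ h,
    (TensorProduct.lid k H) ((TensorProduct.map counit LinearMap.id) (comul h)) = α.symm h
  counit_comul_right : ∀ h,
    (TensorProduct.rid k H) ((TensorProduct.map LinearMap.id counit) (comul h)) = α.symm h
  comul_mul : ∀ g h, comul (mul g h) = tmul2 mul mul (comul g) (comul h)
  comul_one : comul one = one ⊗ₜ[k] one
  counit_mul : ∀ g h, counit (mul g h) = counit g * counit h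
  counit_one : counit one = 1
  antipode_left : ∀ h,
    (TensorProduct.lift mul) ((TensorProduct.map S LinearMap.id) (comul h)) = counit h • one
  antipode_right : ∀ h,
    (TensorProduct.lift mul) ((TensorProduct.map LinearMap.id S) (comul h)) = counit h • one
  S_alpha : ∀ h, S (α h) = α (S h)

/-- A right-covariant `(H,α)`-Hom-bimodule. -/
structure RightCovBimod {k H : Type*} [CommRing k] [AddCommGroup H] [Module k H]
    (A : MonHomHopf k H) (M : Type*) [AddCommGroup M] [Module k M] where
  μ : M ≃ₗ[k] M
  lact : H →ₗ[k] M →ₗ[k] M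
  ract : M →ₗ[k] H →ₗ[k] M
  lact_assoc : ∀ g h m, lact (A.α g) (lact h m) = lact (A.mul g h) (μ m)
  lact_one : ∀ m, lact A.one m = μ m
  mu_lact : ∀ h m, μ (lact h m) = lact (A.α h) (μ m)
  ract_assoc : ∀ m g h, ract (μ m) (A.mul g h) = ract (ract m g) (A.α h)
  ract_one : ∀ m, ract m A.one = μ m
  mu_ract : ∀ m h, μ (ract m h) = ract (μ m) (A.α h)
  bimod : ∀ h m g, ract (lact h m) (A.α g) = lact (A.α h) (ract m g)
  sigma : M →ₗ[k] M ⊗[k] H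
  sigma_coassoc : ∀ m,
    (TensorProduct.map sigma A.α.symm.toLinearMap) (sigma m)
      = (TensorProduct.assoc k M H H).symm
          ((TensorProduct.map μ.symm.toLinearMap A.comul) (sigma m))
  sigma_counit : ∀ m,
    (TensorProduct.rid k M) ((TensorProduct.map (LinearMap.id : M →ₗ[k] M) A.counit) (sigma m))
      = μ.symm m
  sigma_mu : ∀ m, sigma (μ m) = TensorProduct.map μ.toLinearMap A.α.toLinearMap (sigma m)
  sigma_cov : ∀ h g m,
    sigma (ract (lact h m) (A.α g))
      = tmul2 lact A.mul (A.comul (A.α h)) (tmul2 ract A.mul (sigma m) (A.comul g))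

/-- The projection `P_R(m) = m_[0] · S(m_[1])`. -/
noncomputable def RightCovBimod.PR {k H : Type*} [CommRing k] [AddCommGroup H] [Module k H]
    {A : MonHomHopf k H} {M : Type*} [AddCommGroup M] [Module k M]
    (B : RightCovBimod A M) : M →ₗ[k] M :=
  (TensorProduct.lift (B.ract.compl₂ A.S)) ∘ₗ B.sigma

/-- The left adjoint Hom-action `h ▷ m = α(h₁) · (μ⁻¹(m) · S(h₂))`; `adLM m h = h ▷ m`. -/
noncomputable def RightCovBimod.adLM {k H : Type*} [CommRing k] [AddCommGroup H] [Module k H]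
    {A : MonHomHopf k H} {M : Type*} [AddCommGroup M] [Module k M]
    (B : RightCovBimod A M) (m : M) : H →ₗ[k] M :=
  (TensorProduct.lift
    ((B.lact.comp A.α.toLinearMap).compl₂ ((B.ract (B.μ.symm m)).comp A.S))) ∘ₗ A.comul

/-- The submodule of right Hom-coinvariants `M^coH = {m | σ(m) = μ⁻¹(m) ⊗ 1}`. -/
noncomputable def RightCovBimod.rcoinv {k H : Type*} [CommRing k] [AddCommGroup H] [Module k H]
    {A : MonHomHopf k H} {M : Type*} [AddCommGroup M] [Module k M]
    (B : RightCovBimod A M) : Submodule k M where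
  carrier := {m | B.sigma m = (B.μ.symm m) ⊗ₜ[k] A.one}
  add_mem' := by
    intro a b ha hb
    simp only [Set.mem_setOf_eq] at *
    rw [map_add, ha, hb, map_add, TensorProduct.add_tmul]
  zero_mem' := by
    simp only [Set.mem_setOf_eq, map_zero, TensorProduct.zero_tmul]
  smul_mem' := by
    intro c x hx
    simp only [Set.mem_setOf_eq] at *
    rw [map_smul, hx, map_smul, TensorProduct.smul_tmul']

/-
Convolution `f * g = m ∘ (f ⊗ g) ∘ Δ` of maps from a Hom-coalgebra to a Hom-algebra is
associative on maps commuting with the structure maps `α`, so convolution inverses are unique.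
Hence the antipode is anti-multiplicative (`S ∘ m` and `m ∘ τ ∘ (S ⊗ S)` are both inverse to
`m` in `Hom(H ⊗ H, H)`) and anti-comultiplicative (`Δ ∘ S` and `τ ∘ (S ⊗ S) ∘ Δ` are both
inverse to `Δ` in `Hom(H, H ⊗ H)`).

Viewing `h ▷ -` as an element `ad h` of the algebra `End M`, the bimodule axioms and
`S(gh) = S(h)S(g)` give `ad (gh) ∘ μ = ad (α g) ∘ ad h`, and `ad 1 = μ` since `S 1 = 1`. For a
coinvariant `m`, right covariance and `Δ(S h) = S(h₂) ⊗ S(h₁)` give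
`σ(h ▷ m) = α(h₁₁)·(μ⁻²(m)·S(h₂₂)) ⊗ α(h₁₂ S(h₂₁))`. Hom-coassociativity and the antipode axiom
collapse `h₁₁ ⊗ h₁₂ S(h₂₁) ⊗ h₂₂` to `α⁻¹(h₁) ⊗ 1 ⊗ α⁻¹(h₂)`, which leaves `μ⁻¹(h ▷ m) ⊗ 1`; the
same collapse shows that `τ ∘ (S ⊗ S) ∘ Δ` is a right convolution inverse of `Δ`.
-/

@[simp] lemma tmul2_tmul {k A B C D E F : Type*} [CommRing k]
    [AddCommGroup A] [AddCommGroup B] [AddCommGroup C] [AddCommGroup D]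
    [AddCommGroup E] [AddCommGroup F]
    [Module k A] [Module k B] [Module k C] [Module k D] [Module k E] [Module k F]
    (f : A →ₗ[k] C →ₗ[k] E) (g : B →ₗ[k] D →ₗ[k] F) (a : A) (b : B) (c : C)
    (d : D) : tmul2 f g (a ⊗ₜ[k] b) (c ⊗ₜ[k] d) = f a c ⊗ₜ[k] g b d := by
  simp [tmul2]

structure HomCoalgebra (k V : Type*) [CommRing k] [AddCommGroup V] [Module k V] where
  α : V ≃ₗ[k] V
  comul : V →ₗ[k] V ⊗[k] V
  counit : V →ₗ[k] k
  coassoc : ∀ c, TensorProduct.assoc k V V V (map comul α.symm.toLinearMap (comul c))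
    = map α.symm.toLinearMap comul (comul c)
  counit_comul_left : ∀ c, TensorProduct.lid k V (map counit LinearMap.id (comul c)) = α.symm c
  counit_comul_right : ∀ c, TensorProduct.rid k V (map LinearMap.id counit (comul c)) = α.symm c

structure HomAlgebra (k W : Type*) [CommRing k] [AddCommGroup W] [Module k W] where
  α : W ≃ₗ[k] W
  mul : W →ₗ[k] W →ₗ[k] W
  one : W
  mul_assoc : ∀ x y z, mul (α x) (mul y z) = mul (mul x y) (α z)
  mul_one : ∀ x, mul x one = α x
  one_mul : ∀ x, mul one x = α x

namespace HomAlgebra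

variable {k V W : Type*} [CommRing k] [AddCommGroup V] [Module k V] [AddCommGroup W] [Module k W]

noncomputable def tensor (A : HomAlgebra k V) (B : HomAlgebra k W) : HomAlgebra k (V ⊗[k] W) where
  α := TensorProduct.congr A.α B.α
  mul := tmul2 A.mul B.mul
  one := A.one ⊗ₜ B.one
  mul_assoc x y z := by
    induction x using TensorProduct.induction_on <;>
      induction y using TensorProduct.induction_on <;>
      induction z using TensorProduct.induction_on <;>
      simp_all [HomAlgebra.mul_assoc]
  mul_one x := by
    induction x using TensorProduct.induction_on <;> simp_all [HomAlgebra.mul_one]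
  one_mul x := by
    induction x using TensorProduct.induction_on <;> simp_all [HomAlgebra.one_mul]

end HomAlgebra

namespace HomCoalgebra

variable {k V W : Type*} [CommRing k] [AddCommGroup V] [Module k V] [AddCommGroup W] [Module k W]

noncomputable def tensor (C : HomCoalgebra k V) (D : HomCoalgebra k W) :
    HomCoalgebra k (V ⊗[k] W) where
  α := TensorProduct.congr C.α D.α
  comul := (tensorTensorTensorComm k V V W W).toLinearMap ∘ₗ map C.comul D.comul
  counit := lift ((LinearMap.mul k k).compl₁₂ C.counit D.counit)
  coassoc x := by
    let σ := (tensorTensorTensorComm k V V W W).toLinearMap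
    let Δ := σ ∘ₗ map C.comul D.comul
    let β := (TensorProduct.congr C.α D.α).symm.toLinearMap
    let Φ := map LinearMap.id σ ∘ₗ
      (tensorTensorTensorComm k V (V ⊗[k] V) W (W ⊗[k] W)).toLinearMap
    have left : map Δ β ∘ₗ σ = map σ LinearMap.id ∘ₗ
        (tensorTensorTensorComm k (V ⊗[k] V) V (W ⊗[k] W) W).toLinearMap ∘ₗ
        map (map C.comul C.α.symm.toLinearMap) (map D.comul D.α.symm.toLinearMap) := by
      ext; simp [σ, Δ, β]
    have right : map β Δ ∘ₗ σ =
        Φ ∘ₗ map (map C.α.symm.toLinearMap C.comul) (map D.α.symm.toLinearMap D.comul) := by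
      ext; simp [σ, Δ, β, Φ]
    have shuffle : (TensorProduct.assoc k (V ⊗[k] W) (V ⊗[k] W) (V ⊗[k] W)).toLinearMap ∘ₗ
        map σ LinearMap.id ∘ₗ
        (tensorTensorTensorComm k (V ⊗[k] V) V (W ⊗[k] W) W).toLinearMap =
        Φ ∘ₗ map (TensorProduct.assoc k V V V).toLinearMap
          (TensorProduct.assoc k W W W).toLinearMap := by
      ext; simp [σ, Φ]
    induction x using TensorProduct.induction_on with
    | zero => simp
    | add x y hx hy => simp only [map_add, hx, hy]
    | tmul c d =>
      change (TensorProduct.assoc k (V ⊗[k] W) (V ⊗[k] W) (V ⊗[k] W)).toLinearMap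
          ((map Δ β ∘ₗ σ) (C.comul c ⊗ₜ D.comul d))
        = (map β Δ ∘ₗ σ) (C.comul c ⊗ₜ D.comul d)
      rw [left, right]
      simpa [C.coassoc, D.coassoc] using
        congr($shuffle (map C.comul C.α.symm.toLinearMap (C.comul c) ⊗ₜ
          map D.comul D.α.symm.toLinearMap (D.comul d)))
  counit_comul_left x := by
    have key : (TensorProduct.lid k (V ⊗[k] W)).toLinearMap ∘ₗ
        map (lift ((LinearMap.mul k k).compl₁₂ C.counit D.counit)) LinearMap.id ∘ₗ
        (tensorTensorTensorComm k V V W W).toLinearMap =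
        map ((TensorProduct.lid k V).toLinearMap ∘ₗ map C.counit LinearMap.id)
          ((TensorProduct.lid k W).toLinearMap ∘ₗ map D.counit LinearMap.id) := by
      ext; simp [mul_smul, smul_tmul', smul_comm (C.counit _)]
    induction x using TensorProduct.induction_on with
    | zero => simp
    | add x y hx hy => simp only [map_add, hx, hy]
    | tmul c d => simpa [C.counit_comul_left, D.counit_comul_left] using
        congr($key (C.comul c ⊗ₜ D.comul d))
  counit_comul_right x := by
    have key : (TensorProduct.rid k (V ⊗[k] W)).toLinearMap ∘ₗ
        map LinearMap.id (lift ((LinearMap.mul k k).compl₁₂ C.counit D.counit)) ∘ₗ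
        (tensorTensorTensorComm k V V W W).toLinearMap =
        map ((TensorProduct.rid k V).toLinearMap ∘ₗ map LinearMap.id C.counit)
          ((TensorProduct.rid k W).toLinearMap ∘ₗ map LinearMap.id D.counit) := by
      ext; simp [mul_smul, smul_tmul', smul_comm (C.counit _)]
    induction x using TensorProduct.induction_on with
    | zero => simp
    | add x y hx hy => simp only [map_add, hx, hy]
    | tmul c d => simpa [C.counit_comul_right, D.counit_comul_right] using
        congr($key (C.comul c ⊗ₜ D.comul d))

variable (C : HomCoalgebra k V) (B : HomAlgebra k W)

noncomputable def conv (f g : V →ₗ[k] W) : V →ₗ[k] W :=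
  lift B.mul ∘ₗ map f g ∘ₗ C.comul

noncomputable def convUnit : V →ₗ[k] W := C.counit.smulRight B.one

variable {C B}

lemma conv_convUnit {f : V →ₗ[k] W} (hf : ∀ x, f (C.α x) = B.α (f x)) :
    C.conv B f (C.convUnit B) = f := by
  have h : lift B.mul ∘ₗ map f (C.convUnit B)
      = B.α.toLinearMap ∘ₗ f ∘ₗ (TensorProduct.rid k V).toLinearMap ∘ₗ
          map LinearMap.id C.counit := by
    ext x y
    simp [convUnit, B.mul_one]
  ext x
  simp only [conv, ← LinearMap.comp_assoc, h]
  simp [C.counit_comul_right, ← hf]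

lemma convUnit_conv {f : V →ₗ[k] W} (hf : ∀ x, f (C.α x) = B.α (f x)) :
    C.conv B (C.convUnit B) f = f := by
  have h : lift B.mul ∘ₗ map (C.convUnit B) f
      = B.α.toLinearMap ∘ₗ f ∘ₗ (TensorProduct.lid k V).toLinearMap ∘ₗ
          map C.counit LinearMap.id := by
    ext x y
    simp [convUnit, B.one_mul]
  ext x
  simp only [conv, ← LinearMap.comp_assoc, h]
  simp [C.counit_comul_left, ← hf]

lemma conv_assoc {f h : V →ₗ[k] W} (g : V →ₗ[k] W) (hf : ∀ x, f (C.α x) = B.α (f x))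
    (hh : ∀ x, h (C.α x) = B.α (h x)) :
    C.conv B (C.conv B f g) h = C.conv B f (C.conv B g h) := by
  have hl : lift B.mul ∘ₗ map (C.conv B f g) h
      = (lift B.mul ∘ₗ map (lift B.mul ∘ₗ map f g) (B.α.toLinearMap ∘ₗ h)) ∘ₗ
          map C.comul C.α.symm.toLinearMap := by
    ext x y
    simp [conv, ← hh]
  have hr : lift B.mul ∘ₗ map f (C.conv B g h)
      = (lift B.mul ∘ₗ map (B.α.toLinearMap ∘ₗ f) (lift B.mul ∘ₗ map g h)) ∘ₗ
          map C.α.symm.toLinearMap C.comul := by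
    ext x y
    simp [conv, ← hf]
  have hm : lift B.mul ∘ₗ map (lift B.mul ∘ₗ map f g) (B.α.toLinearMap ∘ₗ h)
      = (lift B.mul ∘ₗ map (B.α.toLinearMap ∘ₗ f) (lift B.mul ∘ₗ map g h)) ∘ₗ
          (TensorProduct.assoc k V V V).toLinearMap := by
    ext x y z
    simp [B.mul_assoc]
  change (lift B.mul ∘ₗ map (C.conv B f g) h) ∘ₗ C.comul
    = (lift B.mul ∘ₗ map f (C.conv B g h)) ∘ₗ C.comul
  rw [hl, hr, hm]
  have hc : (TensorProduct.assoc k V V V).toLinearMap ∘ₗ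
      map C.comul C.α.symm.toLinearMap ∘ₗ C.comul
      = map C.α.symm.toLinearMap C.comul ∘ₗ C.comul :=
    LinearMap.ext C.coassoc
  simp only [LinearMap.comp_assoc, ← hc]

lemma eq_of_conv_eq_convUnit {f g h : V →ₗ[k] W} (hg : ∀ x, g (C.α x) = B.α (g x))
    (hh : ∀ x, h (C.α x) = B.α (h x)) (hgf : C.conv B g f = C.convUnit B)
    (hfh : C.conv B f h = C.convUnit B) : g = h :=
  calc g = C.conv B g (C.conv B f h) := by rw [hfh, conv_convUnit hg]
    _ = C.conv B (C.conv B g f) h := (conv_assoc f hg hh).symm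
    _ = h := by rw [hgf, convUnit_conv hh]

end HomCoalgebra

namespace MonHomHopf

variable {k H : Type*} [CommRing k] [AddCommGroup H] [Module k H] (A : MonHomHopf k H)

noncomputable def toHomCoalgebra : HomCoalgebra k H :=
  ⟨A.α, A.comul, A.counit, A.hom_coassoc, A.counit_comul_left, A.counit_comul_right⟩

noncomputable def toHomAlgebra : HomAlgebra k H :=
  ⟨A.α, A.mul, A.one, A.hom_assoc, A.mul_one', A.one_mul'⟩

lemma alpha_symm_one : A.α.symm A.one = A.one := by
  rw [LinearEquiv.symm_apply_eq, A.alpha_one]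

lemma S_alpha_symm (h : H) : A.S (A.α.symm h) = A.α.symm (A.S h) := by
  rw [LinearEquiv.eq_symm_apply, ← A.S_alpha, A.α.apply_symm_apply]

lemma counit_alpha_symm (h : H) : A.counit (A.α.symm h) = A.counit h := by
  rw [← A.counit_alpha, A.α.apply_symm_apply]

lemma comul_alpha_symm (h : H) :
    A.comul (A.α.symm h) = map A.α.symm.toLinearMap A.α.symm.toLinearMap (A.comul h) := by
  conv_rhs => rw [← A.α.apply_symm_apply h, A.comul_alpha, map_map]
  simp

lemma S_one : A.S A.one = A.one := by
  have h := A.antipode_left A.one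
  simp only [A.comul_one, map_tmul, lift.tmul, LinearMap.id_coe, id_eq, A.counit_one, one_smul,
    A.mul_one'] at h
  exact A.α.injective (by rw [h, A.alpha_one])

lemma mul_mul_mul_antipode (a b c d : H) :
    A.mul (A.mul a c) (A.mul (A.S d) (A.S b))
      = A.mul (A.mul a (A.mul (A.α.symm c) (A.S (A.α.symm d)))) (A.α (A.S b)) := by
  have hac : A.mul a c = A.α (A.mul (A.α.symm a) (A.α.symm c)) := by
    rw [A.alpha_mul, A.α.apply_symm_apply, A.α.apply_symm_apply]
  have hd : A.S d = A.α (A.S (A.α.symm d)) := by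
    rw [← A.S_alpha, A.α.apply_symm_apply]
  rw [hac, A.hom_assoc, hd, ← A.hom_assoc (A.α.symm a), A.α.apply_symm_apply]

lemma antipode_mul_conv_mul :
    (A.toHomCoalgebra.tensor A.toHomCoalgebra).conv A.toHomAlgebra (A.S ∘ₗ lift A.mul)
      (lift A.mul) = (A.toHomCoalgebra.tensor A.toHomCoalgebra).convUnit A.toHomAlgebra := by
  have key : lift A.mul ∘ₗ map (A.S ∘ₗ lift A.mul) (lift A.mul) ∘ₗ
      (tensorTensorTensorComm k H H H H).toLinearMap =
      lift A.mul ∘ₗ map A.S LinearMap.id ∘ₗ lift (tmul2 A.mul A.mul) := by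
    ext; simp
  ext g h
  have := congr($key (A.comul g ⊗ₜ A.comul h))
  simp only [LinearMap.comp_apply, lift.tmul, ← A.comul_mul, A.antipode_left] at this
  simpa [HomCoalgebra.conv, HomCoalgebra.convUnit, HomCoalgebra.tensor, toHomCoalgebra,
    toHomAlgebra, A.counit_mul] using this

lemma mul_conv_antipode_mul_flip :
    (A.toHomCoalgebra.tensor A.toHomCoalgebra).conv A.toHomAlgebra (lift A.mul)
      (lift (A.mul.flip.compl₁₂ A.S A.S))
      = (A.toHomCoalgebra.tensor A.toHomCoalgebra).convUnit A.toHomAlgebra := by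
  -- `(g₁h₁)(S(h₂)S(g₂)) = (g₁ · α⁻¹(h₁)S(α⁻¹(h₂))) · α(S(g₂))`: the `h`-factor `T` collapses first.
  let T := lift A.mul ∘ₗ map LinearMap.id A.S ∘ₗ
    map A.α.symm.toLinearMap A.α.symm.toLinearMap
  let E := lift A.mul ∘ₗ map (lift A.mul) (A.α.toLinearMap ∘ₗ A.S) ∘ₗ
    (TensorProduct.rightComm k H H H).toLinearMap
  have hT (h : H) : T (A.comul h) = A.counit h • A.one := by
    simp [T, ← A.comul_alpha_symm, A.antipode_right, A.counit_alpha_symm]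
  have hE : lift A.mul ∘ₗ map (lift A.mul) (lift (A.mul.flip.compl₁₂ A.S A.S)) ∘ₗ
      (tensorTensorTensorComm k H H H H).toLinearMap = E ∘ₗ map LinearMap.id T := by
    ext; simp [T, E, A.mul_mul_mul_antipode]
  have hE_one : E ∘ₗ (TensorProduct.mk k (H ⊗[k] H) H).flip A.one
      = A.α.toLinearMap ∘ₗ lift A.mul ∘ₗ map LinearMap.id A.S := by
    ext; simp [E, A.mul_one', A.alpha_mul]
  ext g h
  have := congr($hE (A.comul g ⊗ₜ A.comul h))
  simp only [LinearMap.comp_apply, map_tmul, LinearMap.id_coe, id_eq, hT, tmul_smul,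
    map_smul, LinearEquiv.coe_coe] at this
  have h1 := congr($hE_one (A.comul g))
  simp only [LinearMap.comp_apply, LinearMap.flip_apply, TensorProduct.mk_apply] at h1
  simp [HomCoalgebra.conv, HomCoalgebra.convUnit, HomCoalgebra.tensor, toHomCoalgebra,
    toHomAlgebra, this, h1, A.antipode_right, A.alpha_one, smul_smul, mul_comm]

lemma S_mul (g h : H) : A.S (A.mul g h) = A.mul (A.S h) (A.S g) := by
  have hS : ∀ x, (A.S ∘ₗ lift A.mul) (TensorProduct.congr A.α A.α x)
      = A.α ((A.S ∘ₗ lift A.mul) x) := by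
    intro x
    induction x using TensorProduct.induction_on <;> simp_all [← A.alpha_mul, A.S_alpha]
  have hS' : ∀ x, lift (A.mul.flip.compl₁₂ A.S A.S) (TensorProduct.congr A.α A.α x)
      = A.α (lift (A.mul.flip.compl₁₂ A.S A.S) x) := by
    intro x
    induction x using TensorProduct.induction_on <;> simp_all [A.alpha_mul, A.S_alpha]
  have := HomCoalgebra.eq_of_conv_eq_convUnit hS hS' A.antipode_mul_conv_mul
    A.mul_conv_antipode_mul_flip
  simpa using congr($this (g ⊗ₜ h))

lemma map_counit_smul_one_comul (x : H) :
    map (A.counit.smulRight A.one) LinearMap.id (A.comul x) = A.one ⊗ₜ A.α.symm x := by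
  rw [← A.counit_comul_left]
  induction A.comul x using TensorProduct.induction_on with
  | zero => simp
  | add u v hu hv => simp only [map_add, hu, hv, tmul_add]
  | tmul a b => simp [smul_tmul]

lemma mul_antipode_alpha_comul_comul (x : H) :
    (map (lift A.mul ∘ₗ map LinearMap.id (A.S ∘ₗ A.α.toLinearMap)) A.α.toLinearMap)
      ((TensorProduct.assoc k H H H).symm (map LinearMap.id A.comul (A.comul x)))
      = A.one ⊗ₜ A.α.symm x := by
  have hcoassoc : map LinearMap.id A.comul (A.comul x)
      = map A.α.toLinearMap LinearMap.id
          (TensorProduct.assoc k H H H (map A.comul A.α.symm.toLinearMap (A.comul x))) := by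
    rw [A.hom_coassoc, map_map]
    simp
  have key :
      map (lift A.mul ∘ₗ map LinearMap.id (A.S ∘ₗ A.α.toLinearMap)) A.α.toLinearMap ∘ₗ
      (TensorProduct.assoc k H H H).symm.toLinearMap ∘ₗ map A.α.toLinearMap LinearMap.id ∘ₗ
      (TensorProduct.assoc k H H H).toLinearMap
      = map (A.α.toLinearMap ∘ₗ lift A.mul ∘ₗ map LinearMap.id A.S) A.α.toLinearMap := by
    ext; simp [A.alpha_mul, A.S_alpha]
  have hcounit :
      map (A.α.toLinearMap ∘ₗ lift A.mul ∘ₗ map LinearMap.id A.S) A.α.toLinearMap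
        (map A.comul A.α.symm.toLinearMap (A.comul x))
      = map (A.counit.smulRight A.one) LinearMap.id (A.comul x) := by
    rw [← LinearMap.comp_apply, ← map_comp]
    congr 2 <;> ext <;> simp [A.antipode_right, A.alpha_one]
  rw [hcoassoc, ← A.map_counit_smul_one_comul, ← hcounit, ← key]
  simp

noncomputable def antipodeContract :
    (H ⊗[k] H) ⊗[k] (H ⊗[k] H) →ₗ[k] H ⊗[k] (H ⊗[k] H) :=
  map LinearMap.id (map (lift A.mul ∘ₗ map LinearMap.id A.S) LinearMap.id ∘ₗ
    (TensorProduct.assoc k H H H).symm.toLinearMap) ∘ₗ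
    (TensorProduct.assoc k H H (H ⊗[k] H)).toLinearMap

@[simp] lemma antipodeContract_tmul (a b c d : H) :
    A.antipodeContract ((a ⊗ₜ b) ⊗ₜ (c ⊗ₜ d))
      = a ⊗ₜ (A.mul b (A.S c) ⊗ₜ d) := by
  simp [antipodeContract]

lemma antipodeContract_comul_comul (h : H) :
    A.antipodeContract (map A.comul A.comul (A.comul h))
      = map A.α.symm.toLinearMap (TensorProduct.mk k H H A.one ∘ₗ A.α.symm.toLinearMap)
          (A.comul h) := by
  let Ψ := map (lift A.mul ∘ₗ map LinearMap.id (A.S ∘ₗ A.α.toLinearMap))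
    A.α.toLinearMap ∘ₗ (TensorProduct.assoc k H H H).symm.toLinearMap
  have hsplit : map A.comul A.comul (A.comul h) = map LinearMap.id (A.comul ∘ₗ A.α.toLinearMap)
      ((TensorProduct.assoc k H H H).symm (map A.α.symm.toLinearMap A.comul (A.comul h))) := by
    rw [← A.hom_coassoc, LinearEquiv.symm_apply_apply, map_map]
    simp [LinearMap.comp_assoc]
  have hα : map (lift A.mul ∘ₗ map LinearMap.id A.S) LinearMap.id ∘ₗ
      (TensorProduct.assoc k H H H).symm.toLinearMap ∘ₗ
      map LinearMap.id (map A.α.toLinearMap A.α.toLinearMap) = Ψ := by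
    ext; simp [Ψ]
  have hcontract :
      A.antipodeContract ∘ₗ map LinearMap.id (A.comul ∘ₗ A.α.toLinearMap) ∘ₗ
        (TensorProduct.assoc k H H H).symm.toLinearMap
      = map LinearMap.id (Ψ ∘ₗ map LinearMap.id A.comul) := by
    ext a b c
    simpa [antipodeContract, A.comul_alpha] using congr(a ⊗ₜ[k] $hα (b ⊗ₜ A.comul c))
  have hcollapse : Ψ ∘ₗ map LinearMap.id A.comul ∘ₗ A.comul
      = TensorProduct.mk k H H A.one ∘ₗ A.α.symm.toLinearMap := by
    ext x
    exact A.mul_antipode_alpha_comul_comul x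
  have := congr($hcontract (map A.α.symm.toLinearMap A.comul (A.comul h)))
  simp only [LinearMap.comp_apply, map_map, LinearMap.id_comp, LinearEquiv.coe_coe] at this
  rw [hsplit, this, LinearMap.comp_assoc, hcollapse]

lemma comul_antipode_conv_comul :
    A.toHomCoalgebra.conv (A.toHomAlgebra.tensor A.toHomAlgebra) (A.comul ∘ₗ A.S) A.comul
      = A.toHomCoalgebra.convUnit (A.toHomAlgebra.tensor A.toHomAlgebra) := by
  have key : lift (tmul2 A.mul A.mul) ∘ₗ map (A.comul ∘ₗ A.S) A.comul
      = A.comul ∘ₗ lift A.mul ∘ₗ map A.S LinearMap.id := by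
    ext; simp [A.comul_mul]
  ext h
  simpa [HomCoalgebra.conv, HomCoalgebra.convUnit, HomAlgebra.tensor, toHomCoalgebra,
    toHomAlgebra, A.antipode_left, A.comul_one] using congr($key (A.comul h))

lemma comul_conv_comm_antipode :
    A.toHomCoalgebra.conv (A.toHomAlgebra.tensor A.toHomAlgebra) A.comul
      ((TensorProduct.comm k H H).toLinearMap ∘ₗ map A.S A.S ∘ₗ A.comul)
      = A.toHomCoalgebra.convUnit (A.toHomAlgebra.tensor A.toHomAlgebra) := by
  let Θ := map (lift A.mul ∘ₗ map LinearMap.id A.S) LinearMap.id ∘ₗ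
    (TensorProduct.rightComm k H H H).toLinearMap ∘ₗ
    (TensorProduct.assoc k H H H).symm.toLinearMap
  have hΘ : lift (tmul2 A.mul A.mul) ∘ₗ
      map LinearMap.id ((TensorProduct.comm k H H).toLinearMap ∘ₗ map A.S A.S)
      = Θ ∘ₗ A.antipodeContract := by
    ext; simp [Θ]
  have hΘ_one : Θ ∘ₗ
      map A.α.symm.toLinearMap (TensorProduct.mk k H H A.one ∘ₗ A.α.symm.toLinearMap)
      = (TensorProduct.mk k H H).flip A.one ∘ₗ lift A.mul ∘ₗ map LinearMap.id A.S ∘ₗ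
          map A.α.symm.toLinearMap A.α.symm.toLinearMap := by
    ext; simp [Θ]
  ext h
  have := congr($hΘ (map A.comul A.comul (A.comul h)))
  simp only [LinearMap.comp_apply, map_map, LinearMap.id_comp, LinearMap.comp_assoc,
    A.antipodeContract_comul_comul] at this
  simpa [HomCoalgebra.conv, HomCoalgebra.convUnit, HomAlgebra.tensor, toHomCoalgebra,
    toHomAlgebra, this, ← A.comul_alpha_symm, A.antipode_right, A.counit_alpha_symm, smul_tmul']
    using congr($hΘ_one (A.comul h))

lemma comul_S (h : H) :
    A.comul (A.S h) = TensorProduct.comm k H H (map A.S A.S (A.comul h)) := by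
  have := HomCoalgebra.eq_of_conv_eq_convUnit (f := A.comul)
    (g := A.comul ∘ₗ A.S)
    (h := (TensorProduct.comm k H H).toLinearMap ∘ₗ map A.S A.S ∘ₗ A.comul)
    (fun x => by
      simp [toHomCoalgebra, HomAlgebra.tensor, toHomAlgebra, A.S_alpha, A.comul_alpha]
      rfl)
    (fun x => by
      simp only [toHomCoalgebra, HomAlgebra.tensor, toHomAlgebra, LinearMap.comp_apply,
        A.comul_alpha]
      induction A.comul x using TensorProduct.induction_on <;> simp_all [A.S_alpha])
    A.comul_antipode_conv_comul A.comul_conv_comm_antipode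
  simpa using congr($this h)

end MonHomHopf

namespace RightCovBimod

variable {k H : Type*} [CommRing k] [AddCommGroup H] [Module k H] {A : MonHomHopf k H}
  {M : Type*} [AddCommGroup M] [Module k M] (B : RightCovBimod A M)

lemma mu_symm_lact (h : H) (m : M) :
    B.μ.symm (B.lact h m) = B.lact (A.α.symm h) (B.μ.symm m) := by
  rw [LinearEquiv.symm_apply_eq, B.mu_lact, A.α.apply_symm_apply, B.μ.apply_symm_apply]

lemma mu_symm_ract (m : M) (h : H) :
    B.μ.symm (B.ract m h) = B.ract (B.μ.symm m) (A.α.symm h) := by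
  rw [LinearEquiv.symm_apply_eq, B.mu_ract, A.α.apply_symm_apply, B.μ.apply_symm_apply]

noncomputable def ad : H →ₗ[k] Module.End k M :=
  lift ((LinearMap.mul k (Module.End k M)).compl₁₂ (B.lact ∘ₗ A.α.toLinearMap)
    ((LinearMap.mul k (Module.End k M)).flip B.μ.symm.toLinearMap ∘ₗ B.ract.flip ∘ₗ
      A.S)) ∘ₗ A.comul

lemma adLM_apply (m : M) (h : H) : B.adLM m h = B.ad h m := by
  simp only [adLM, ad, LinearMap.comp_apply]
  induction A.comul h using TensorProduct.induction_on <;> simp_all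

lemma ad_one : B.ad A.one = B.μ.toLinearMap := by
  ext m
  simp [ad, A.comul_one, A.alpha_one, A.S_one, B.ract_one, B.lact_one]

lemma ad_mul (g h : H) : B.ad (A.mul g h) * B.μ.toLinearMap = B.ad (A.α g) * B.ad h := by
  let T := (LinearMap.mul k (Module.End k M)).compl₁₂ (B.lact ∘ₗ A.α.toLinearMap)
    ((LinearMap.mul k (Module.End k M)).flip B.μ.symm.toLinearMap ∘ₗ B.ract.flip ∘ₗ A.S)
  have key : (LinearMap.mul k (Module.End k M)).flip B.μ.toLinearMap ∘ₗ lift T ∘ₗ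
      lift (tmul2 A.mul A.mul)
      = lift (LinearMap.mul k (Module.End k M)) ∘ₗ
          map (lift T ∘ₗ map A.α.toLinearMap A.α.toLinearMap) (lift T) := by
    ext a b c d m
    simp [T]
    rw [A.S_mul b d, B.mu_symm_lact, B.mu_symm_ract, A.α.symm_apply_apply, A.S_alpha b,
      B.bimod c _ (A.S b), B.lact_assoc, ← A.alpha_mul, B.mu_ract, B.mu_ract,
      B.μ.apply_symm_apply, A.α.apply_symm_apply, ← B.ract_assoc, B.μ.apply_symm_apply]
  simpa [ad, T, A.comul_mul, A.comul_alpha] using congr($key (A.comul g ⊗ₜ A.comul h))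

lemma sigma_mu_symm_of_mem_rcoinv {m : M} (hm : m ∈ B.rcoinv) :
    B.sigma (B.μ.symm m) = B.μ.symm (B.μ.symm m) ⊗ₜ A.one := by
  have h := B.sigma_mu (B.μ.symm m)
  rw [B.μ.apply_symm_apply, show B.sigma m = _ from hm] at h
  simpa [map_map, A.alpha_symm_one] using
    congr(map B.μ.symm.toLinearMap A.α.symm.toLinearMap $h).symm

lemma adLM_mem_rcoinv (h : H) {m : M} (hm : m ∈ B.rcoinv) : B.adLM m h ∈ B.rcoinv := by
  let N := B.μ.symm (B.μ.symm m)
  let Θ := map (lift ((B.lact.comp A.α.toLinearMap).compl₂ ((B.ract N).comp A.S)))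
      A.α.toLinearMap ∘ₗ
    (TensorProduct.rightComm k H H H).toLinearMap ∘ₗ
    (TensorProduct.assoc k H H H).symm.toLinearMap
  let Λ := lift (tmul2 B.lact A.mul) ∘ₗ map (map A.α.toLinearMap A.α.toLinearMap)
    (tmul2 B.ract A.mul (N ⊗ₜ A.one) ∘ₗ (TensorProduct.comm k H H).toLinearMap ∘ₗ
      map A.S A.S)
  have hσ : B.sigma ∘ₗ lift ((B.lact.comp A.α.toLinearMap).compl₂
      ((B.ract (B.μ.symm m)).comp A.S)) = Λ ∘ₗ map A.comul A.comul := by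
    refine TensorProduct.ext' fun a b => ?_
    simp only [Λ, N, LinearMap.comp_apply, LinearMap.compl₂_apply, lift.tmul,
      LinearEquiv.coe_coe, map_tmul]
    rw [← B.bimod, B.sigma_cov, B.sigma_mu_symm_of_mem_rcoinv hm, A.comul_S, A.comul_alpha]
  have hΛ : Λ = Θ ∘ₗ A.antipodeContract := by
    ext; simp [Λ, Θ, A.one_mul', A.alpha_mul]
  have hΘ :
      Θ ∘ₗ map A.α.symm.toLinearMap (TensorProduct.mk k H H A.one ∘ₗ A.α.symm.toLinearMap)
      = (TensorProduct.mk k M H).flip A.one ∘ₗ B.μ.symm.toLinearMap ∘ₗ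
        lift ((B.lact.comp A.α.toLinearMap).compl₂ ((B.ract (B.μ.symm m)).comp A.S)) := by
    ext; simp [Θ, N, B.mu_symm_lact, B.mu_symm_ract, A.S_alpha_symm, A.alpha_one]
  calc B.sigma (B.adLM m h) = Λ (map A.comul A.comul (A.comul h)) := congr($hσ (A.comul h))
    _ = Θ (map A.α.symm.toLinearMap (TensorProduct.mk k H H A.one ∘ₗ A.α.symm.toLinearMap)
          (A.comul h)) := by
      rw [hΛ, LinearMap.comp_apply, A.antipodeContract_comul_comul]
    _ = B.μ.symm (B.adLM m h) ⊗ₜ A.one := congr($hΘ (A.comul h))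

end RightCovBimod

/-- the left adjoint Hom-action `h ▷ m = α(h₁)·(μ⁻¹(m)·S(h₂))` preserves
right coinvariants and makes `M^coH` a left `(H,α)`-Hom-module. -/
theorem adLM_left_module_on_coinvariants {k H : Type*} [CommRing k] [AddCommGroup H] [Module k H]
    (A : MonHomHopf k H) {M : Type*} [AddCommGroup M] [Module k M]
    (B : RightCovBimod A M) :
    (∀ h : H, ∀ m ∈ B.rcoinv, B.adLM m h ∈ B.rcoinv) ∧
    (∀ m ∈ B.rcoinv, B.adLM m A.one = B.μ m) ∧
    (∀ g h : H, ∀ m ∈ B.rcoinv, B.adLM (B.μ m) (A.mul g h) = B.adLM (B.adLM m h) (A.α g)) := by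
  refine ⟨fun h m hm => B.adLM_mem_rcoinv h hm, fun m _ => ?_, fun g h m _ => ?_⟩
  · rw [B.adLM_apply, B.ad_one, LinearEquiv.coe_coe]
  · rw [B.adLM_apply, B.adLM_apply, B.adLM_apply, ← Module.End.mul_apply, ← B.ad_mul,
      Module.End.mul_apply, LinearEquiv.coe_coe]
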